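/- arXiv:1909.12783 — 2 statements merged into one kernel-verified Lean document; each statement's English description precedes it below -/
import Mathlib

section
/- Let F be a saturated fusion system on a finite 2-group S. Then the trace map tr^F_S : B(S)^× → (B(S)^×)^{Out_F(S)} is split surjective, B(S)^× = Ker(tr^F_S) × (B(S)^×)^{Out_F(S)}, and B(F)^× ≤ (B(S)^×)^{Out_F(S)}. -/
namespace BurnsideFusion

/-! ### The Burnside ring, realized via marks inside the ghost ring -/

/-- The vector of marks of the transitive `G`-set `G/K`:
its value at `H ≤ G` is the number of `H`-fixed points of `G/K`. -/
noncomputable def markVector (G : Type*) [Group G] (K : Subgroup G) : Subgroup G → ℤ :=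
  fun H => (Nat.card {x : G ⧸ K // ∀ h : G, h ∈ H → h • x = x} : ℤ)

/-- The Burnside ring of `G`, realized (faithfully, via the injective mark homomorphism)
as the subring of the ghost ring `∏_{H ≤ G} ℤ` generated by the marks of the
transitive `G`-sets `G/K`.  The mark of an element `a` at `H` is just `a H`. -/
noncomputable def burnsideRing (G : Type*) [Group G] : Subring (Subgroup G → ℤ) :=
  Subring.closure (Set.range (markVector G))

/-- The unit group `B(G)^×` of the Burnside ring, as a set:
since every unit of `B(G)` has all marks `±1`, the units are exactly the
elements squaring to `1`. -/
def burnsideUnits (G : Type*) [Group G] : Set (Subgroup G → ℤ) :=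
  {b | b ∈ burnsideRing G ∧ b * b = 1}

/-- Restriction `B(G) → B(S)` for `S ≤ G`, on marks:
`(n_H)_{H ≤ G} ↦ (n_P)_{P ≤ S}`. -/
def resMark {G : Type*} [Group G] (S : Subgroup G) (b : Subgroup G → ℤ) :
    Subgroup ↥S → ℤ :=
  fun P => b (P.map S.subtype)

/-- The action of a (bijective) endomorphism `f` of `G` on the ghost ring, on marks:
`(f · b)_Q = b_{f⁻¹(Q)}`. -/
def autAct {G : Type*} [Group G] (f : G →* G) (b : Subgroup G → ℤ) : Subgroup G → ℤ :=
  fun Q => b (Q.comap f)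

/-- The elements of the Burnside ring fixed by a set `A` of automorphisms of `G`.
(For `A = Aut_F(P)` this is `B(P)^{Out_F(P)}`, since the inner automorphisms
act trivially on `B(P)`.) -/
def fixedBurnside (G : Type*) [Group G] (A : Set (MulAut G)) : Set (Subgroup G → ℤ) :=
  {b | b ∈ burnsideRing G ∧ ∀ α ∈ A, autAct α.toMonoidHom b = b}

/-- The units of the Burnside ring fixed by a set `A` of automorphisms of `G`. -/
def fixedUnits (G : Type*) [Group G] (A : Set (MulAut G)) : Set (Subgroup G → ℤ) :=
  {b | b ∈ burnsideUnits G ∧ ∀ α ∈ A, autAct α.toMonoidHom b = b}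

/-- The relative trace map `tr^Γ_Δ` on the (units of the) Burnside ring:
the product of `α · b` over a set of representatives `α` of the cosets `Γ/Δ`. -/
noncomputable def relTrace {G : Type*} [Group G] (Γ Δ : Subgroup (MulAut G))
    (b : Subgroup G → ℤ) : Subgroup G → ℤ :=
  ∏ᶠ c : ↥Γ ⧸ Δ.subgroupOf Γ, autAct ((Quotient.out c : ↥Γ) : MulAut G).toMonoidHom b

/-! ### Fusion systems -/

/-- The homomorphism `P → Q` induced by conjugation by `s`. -/
def conjMap {S : Type*} [Group S] (s : S) (P Q : Subgroup S)
    (h : ∀ x ∈ P, s * x * s⁻¹ ∈ Q) : ↥P →* ↥Q where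
  toFun x := ⟨s * ↑x * s⁻¹, h x x.2⟩
  map_one' := by ext; simp
  map_mul' x y := by ext; simp

/-- A fusion system `F` on a group `S`: a category whose objects are the subgroups
of `S` and whose morphisms are injective group homomorphisms, containing all the
homomorphisms induced by conjugation in `S`, and such that every morphism factors
as an isomorphism in `F` followed by an inclusion. -/
structure FusionSystem (S : Type*) [Group S] where
  /-- The set of `F`-morphisms `P → Q`. -/
  Hom : ∀ P Q : Subgroup S, Set (↥P →* ↥Q)
  /-- All morphisms are injective. -/
  inj : ∀ {P Q : Subgroup S} {f : ↥P →* ↥Q}, f ∈ Hom P Q → Function.Injective f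
  /-- `Hom_S(P,Q) ⊆ Hom_F(P,Q)`. -/
  conj_mem : ∀ (s : S) (P Q : Subgroup S) (h : ∀ x ∈ P, s * x * s⁻¹ ∈ Q),
    conjMap s P Q h ∈ Hom P Q
  /-- Morphisms compose. -/
  comp_mem : ∀ {P Q R : Subgroup S} {f : ↥P →* ↥Q} {g : ↥Q →* ↥R},
    f ∈ Hom P Q → g ∈ Hom Q R → g.comp f ∈ Hom P R
  /-- Every morphism factors as an isomorphism in `F` onto its image followed by an
  inclusion. -/
  factor_mem : ∀ {P Q : Subgroup S} {f : ↥P →* ↥Q}, f ∈ Hom P Q →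
    ∃ (R : Subgroup S) (_ : R ≤ Q) (e : ↥P ≃* ↥R), e.toMonoidHom ∈ Hom P R ∧
      ∀ x : ↥P, ((e x : ↥R) : S) = ((f x : ↥Q) : S)
  /-- Isomorphisms in `F` are invertible in `F`. -/
  isoinv_mem : ∀ {P Q : Subgroup S} (e : ↥P ≃* ↥Q),
    e.toMonoidHom ∈ Hom P Q → e.symm.toMonoidHom ∈ Hom Q P

namespace FusionSystem

variable {S : Type*} [Group S] (F : FusionSystem S)

/-- Two subgroups of `S` are `F`-conjugate (isomorphic in `F`). -/
def SubConj (P Q : Subgroup S) : Prop :=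
  ∃ f ∈ F.Hom P Q, Function.Surjective ⇑f

/-- Two elements of `S` are `F`-conjugate: some `F`-isomorphism `⟨x⟩ → ⟨y⟩` sends
`x` to `y`. -/
def ElemConj (x y : S) : Prop :=
  ∃ f ∈ F.Hom (Subgroup.zpowers x) (Subgroup.zpowers y),
    f ⟨x, Subgroup.mem_zpowers x⟩ = ⟨y, Subgroup.mem_zpowers y⟩

/-- A subgroup `P ≤ S` is strongly closed in `F` if the `F`-conjugacy class of every
element of `P` is contained in `P`. -/
def StronglyClosed (P : Subgroup S) : Prop :=
  ∀ x ∈ P, ∀ y : S, F.ElemConj x y → y ∈ P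

/-- A subgroup `P` is normal in `F`: every morphism `φ ∈ Hom_F(Q,R)` extends to a
morphism `ψ ∈ Hom_F(QP, RP)` with `ψ|_Q = φ` and `ψ(P) = P`. -/
def NormalIn (P : Subgroup S) : Prop :=
  ∀ (Q R : Subgroup S), ∀ φ ∈ F.Hom Q R,
    ∃ ψ ∈ F.Hom (Q ⊔ P) (R ⊔ P),
      (∀ (x : S) (hx : x ∈ Q),
        ((ψ ⟨x, Subgroup.mem_sup_left hx⟩ : ↥(R ⊔ P)) : S) = ((φ ⟨x, hx⟩ : ↥R) : S)) ∧
      (∀ (x : S) (hx : x ∈ P),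
        ((ψ ⟨x, Subgroup.mem_sup_right hx⟩ : ↥(R ⊔ P)) : S) ∈ P) ∧
      (∀ y ∈ P, ∃ (x : S) (hx : x ∈ P),
        ((ψ ⟨x, Subgroup.mem_sup_right hx⟩ : ↥(R ⊔ P)) : S) = y)

/-- `Aut_F(P)`: the group of `F`-automorphisms of `P`. -/
def AutF (P : Subgroup S) : Subgroup (MulAut ↥P) where
  carrier := {α | α.toMonoidHom ∈ F.Hom P P}
  one_mem' := by
    have h : ∀ x ∈ P, (1 : S) * x * (1 : S)⁻¹ ∈ P := fun x hx => by simpa using hx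
    have h1 := F.conj_mem 1 P P h
    have e : conjMap (1 : S) P P h = (1 : MulAut ↥P).toMonoidHom := by
      ext x; simp [conjMap]
    rwa [e] at h1
  mul_mem' := by
    intro α β hα hβ
    have h := F.comp_mem hβ hα
    have e : α.toMonoidHom.comp β.toMonoidHom = (α * β).toMonoidHom := rfl
    rwa [e] at h
  inv_mem' := by
    intro α hα
    exact F.isoinv_mem α hα

end FusionSystem

/-- The conjugation automorphism of `P` induced by an element of its normalizer. -/
def conjAut {S : Type*} [Group S] (P : Subgroup S) (s : ↥(Subgroup.normalizer (P : Set S))) : MulAut ↥P where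
  toFun x := ⟨(s : S) * ↑x * (s : S)⁻¹, (Subgroup.mem_normalizer_iff.mp s.2 ↑x).mp x.2⟩
  invFun x := ⟨(s : S)⁻¹ * ↑x * (s : S), by
    have h := (Subgroup.mem_normalizer_iff.mp ((Subgroup.normalizer (P : Set S)).inv_mem s.2) (↑x : S)).mp x.2
    simpa using h⟩
  left_inv x := by ext; simp; group
  right_inv x := by ext; simp; group
  map_mul' x y := by ext; simp

/-- The homomorphism `N_S(P) → Aut(P)` given by conjugation. -/
def conjAutHom {S : Type*} [Group S] (P : Subgroup S) : ↥(Subgroup.normalizer (P : Set S)) →* MulAut ↥P where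
  toFun := conjAut P
  map_one' := by ext x; simp [conjAut]
  map_mul' s t := by ext x; simp [conjAut]; group

/-- `Aut_S(P)`: the subgroup of `Aut(P)` of automorphisms induced by conjugation in `S`. -/
def AutS {S : Type*} [Group S] (P : Subgroup S) : Subgroup (MulAut ↥P) :=
  (conjAutHom P).range

end BurnsideFusion

namespace BurnsideFusion

variable {S : Type*} [Group S]

/-- The automorphism of `⊤ ≤ S` induced by an automorphism of `S`. -/
def topRestrict (α : MulAut S) : MulAut ↥(⊤ : Subgroup S) :=
  (Subgroup.topEquiv.trans α).trans Subgroup.topEquiv.symm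

theorem topRestrict_one : topRestrict (1 : MulAut S) = 1 := by
  ext x; simp [topRestrict]

theorem topRestrict_mul (α β : MulAut S) :
    topRestrict (α * β) = topRestrict α * topRestrict β := by
  ext x; simp [topRestrict]

theorem topRestrict_inv (α : MulAut S) :
    topRestrict α⁻¹ = (topRestrict α).symm := by
  ext x; simp [topRestrict, MulAut.inv_def]

/-- `Aut_F(S)`, realized as a subgroup of `Aut(S)`. -/
def FusionSystem.AutFS (F : FusionSystem S) : Subgroup (MulAut S) where
  carrier := {α | (topRestrict α).toMonoidHom ∈ F.Hom ⊤ ⊤}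
  one_mem' := by
    have h := (F.AutF ⊤).one_mem
    have h' : (1 : MulAut ↥(⊤ : Subgroup S)).toMonoidHom ∈ F.Hom ⊤ ⊤ := h
    simpa [Set.mem_setOf_eq, topRestrict_one] using h'
  mul_mem' := by
    intro α β hα hβ
    have h := F.comp_mem (hβ : (topRestrict β).toMonoidHom ∈ F.Hom ⊤ ⊤) hα
    have e : (topRestrict α).toMonoidHom.comp (topRestrict β).toMonoidHom
        = (topRestrict (α * β)).toMonoidHom := by
      rw [topRestrict_mul]; rfl
    show (topRestrict (α * β)).toMonoidHom ∈ F.Hom ⊤ ⊤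
    rw [← e]; exact h
  inv_mem' := by
    intro α hα
    have h := F.isoinv_mem (topRestrict α) hα
    simpa [Set.mem_setOf_eq, topRestrict_inv] using h

end BurnsideFusion

namespace BurnsideFusion

variable {S : Type*} [Group S]

namespace FusionSystem

variable (F : FusionSystem S)

/-- `P` is fully normalized in `F`: its normalizer has maximal order in its
`F`-conjugacy class. -/
def FullyNormalized (P : Subgroup S) : Prop :=
  ∀ Q : Subgroup S, F.SubConj P Q → Nat.card ↥(Subgroup.normalizer (Q : Set S)) ≤ Nat.card ↥(Subgroup.normalizer (P : Set S))

/-- `P` is fully centralized in `F`: its centralizer has maximal order in its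
`F`-conjugacy class. -/
def FullyCentralized (P : Subgroup S) : Prop :=
  ∀ Q : Subgroup S, F.SubConj P Q →
    Nat.card ↥(Subgroup.centralizer (Q : Set S)) ≤ Nat.card ↥(Subgroup.centralizer (P : Set S))

/-- `P` is `F`-centric: every `F`-conjugate `Q` of `P` satisfies `C_S(Q) ≤ Q`. -/
def Centric (P : Subgroup S) : Prop :=
  ∀ Q : Subgroup S, F.SubConj P Q → Subgroup.centralizer (Q : Set S) ≤ Q

/-- `P` is fully `F`-automized: `Aut_S(P)` is a Sylow `p`-subgroup of `Aut_F(P)`. -/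
def FullyAutomized (p : ℕ) (P : Subgroup S) : Prop :=
  AutS P ≤ F.AutF P ∧ IsPGroup p ↥((AutS P).subgroupOf (F.AutF P)) ∧
    ¬ p ∣ ((AutS P).subgroupOf (F.AutF P)).index

end FusionSystem

/-- For an `F`-isomorphism `φ : P → Q`, the subset
`N_φ = { g ∈ N_S(P) | φ ∘ c_g ∘ φ⁻¹ ∈ Aut_S(Q) }` of `S`. -/
def NphiSet (P Q : Subgroup S) (φ : ↥P ≃* ↥Q) : Set S :=
  {g | ∃ hg : g ∈ Subgroup.normalizer (P : Set S), ∃ h : S, ∀ (x : S) (hx : x ∈ P),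
    ((φ ⟨g * x * g⁻¹, (Subgroup.mem_normalizer_iff.mp hg x).mp hx⟩ : ↥Q) : S)
      = h * ((φ ⟨x, hx⟩ : ↥Q) : S) * h⁻¹}

namespace FusionSystem

variable (F : FusionSystem S)

/-- `Q` is receptive in `F`: every `F`-isomorphism `φ : P → Q` extends to a morphism
in `F` defined on `N_φ`. -/
def Receptive (Q : Subgroup S) : Prop :=
  ∀ (P : Subgroup S) (φ : ↥P ≃* ↥Q), φ.toMonoidHom ∈ F.Hom P Q →
    ∃ T : Subgroup S, (T : Set S) = NphiSet P Q φ ∧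
      ∃ ψ ∈ F.Hom T ⊤, ∀ (x : S) (hx : x ∈ P) (hx' : x ∈ T),
        ((ψ ⟨x, hx'⟩ : ↥(⊤ : Subgroup S)) : S) = ((φ ⟨x, hx⟩ : ↥Q) : S)

/-- `F` is saturated: every `F`-conjugacy class of subgroups contains a fully
automized, receptive member. -/
def IsSaturated (p : ℕ) : Prop :=
  ∀ P : Subgroup S, ∃ Q : Subgroup S, F.SubConj P Q ∧ F.FullyAutomized p Q ∧ F.Receptive Q

end FusionSystem

theorem innRange_subgroupOf_normal (F : FusionSystem S) (P : Subgroup S) :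
    (((MulAut.conj : ↥P →* MulAut ↥P).range).subgroupOf (F.AutF P)).Normal := by
  have h : ((MulAut.conj : ↥P →* MulAut ↥P).range).Normal := by
    constructor
    intro n hn g
    obtain ⟨x, rfl⟩ := hn
    refine ⟨g x, ?_⟩
    ext y
    simp [MulAut.conj_apply, MulAut.inv_def, mul_assoc]
  exact h.subgroupOf _

/-- `Out_F(P) = Aut_F(P)/Inn(P)`. -/
def OutF (F : FusionSystem S) (P : Subgroup S) : Type _ :=
  ↥(F.AutF P) ⧸ ((MulAut.conj : ↥P →* MulAut ↥P).range.subgroupOf (F.AutF P))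

noncomputable instance (F : FusionSystem S) (P : Subgroup S) : Group (OutF F P) :=
  letI := innRange_subgroupOf_normal F P
  QuotientGroup.Quotient.group _

/-- A strongly `p`-embedded subgroup: a proper subgroup `H < Γ` such that `p` divides
`|H|` and `p` does not divide `|H ∩ gHg⁻¹|` for every `g ∉ H`. -/
def IsStronglyPEmbedded (p : ℕ) {Γ : Type*} [Group Γ] (H : Subgroup Γ) : Prop :=
  H ≠ ⊤ ∧ p ∣ Nat.card ↥H ∧
    ∀ g : Γ, g ∉ H → ¬ p ∣ Nat.card ↥(H ⊓ H.map (MulAut.conj g).toMonoidHom)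

/-- `R` is `F`-essential: `R` is fully normalized, `F`-centric, and `Out_F(R)`
contains a strongly `p`-embedded subgroup. -/
def IsEssential (p : ℕ) (F : FusionSystem S) (R : Subgroup S) : Prop :=
  F.FullyNormalized R ∧ F.Centric R ∧
    ∃ H : Subgroup (OutF F R), IsStronglyPEmbedded p H

/-- The Burnside ring `B(F)` of a fusion system: the subring of `B(S)` of elements
whose marks agree on `F`-conjugate subgroups. -/
noncomputable def FusionSystem.burnside (F : FusionSystem S) : Subring (Subgroup S → ℤ) where
  carrier := {b | b ∈ burnsideRing S ∧ ∀ P Q : Subgroup S, F.SubConj P Q → b P = b Q}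
  zero_mem' := ⟨zero_mem _, fun _ _ _ => rfl⟩
  one_mem' := ⟨one_mem _, fun _ _ _ => rfl⟩
  add_mem' := fun ha hb => ⟨add_mem ha.1 hb.1, fun P Q h => by
    simp only [Pi.add_apply, ha.2 P Q h, hb.2 P Q h]⟩
  mul_mem' := fun ha hb => ⟨mul_mem ha.1 hb.1, fun P Q h => by
    simp only [Pi.mul_apply, ha.2 P Q h, hb.2 P Q h]⟩
  neg_mem' := fun ha => ⟨neg_mem ha.1, fun P Q h => by
    simp only [Pi.neg_apply, ha.2 P Q h]⟩

/-- The unit group `B(F)^×` of the Burnside ring of a fusion system, as a set. -/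
noncomputable def FusionSystem.burnsideUnits (F : FusionSystem S) : Set (Subgroup S → ℤ) :=
  {b | b ∈ F.burnside ∧ b * b = 1}

/-- `F`-conjugacy as an equivalence relation on the subgroups of `S`. -/
def fconjSetoid (F : FusionSystem S) : Setoid (Subgroup S) where
  r := F.SubConj
  iseqv := by
    constructor
    · intro P
      refine ⟨conjMap 1 P P (fun x hx => by simpa using hx), F.conj_mem _ _ _ _, ?_⟩
      intro y; exact ⟨y, by ext; simp [conjMap]⟩
    · rintro P Q ⟨f, hf, hsurj⟩
      have hbij : Function.Bijective ⇑f := ⟨F.inj hf, hsurj⟩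
      have he : (MulEquiv.ofBijective f hbij).toMonoidHom ∈ F.Hom P Q := by
        have : (MulEquiv.ofBijective f hbij).toMonoidHom = f := by ext x; rfl
        rwa [this]
      exact ⟨(MulEquiv.ofBijective f hbij).symm.toMonoidHom, F.isoinv_mem _ he,
        (MulEquiv.ofBijective f hbij).symm.surjective⟩
    · rintro P Q R ⟨f, hf, hfs⟩ ⟨g, hg, hgs⟩
      exact ⟨g.comp f, F.comp_mem hf hg, hgs.comp hfs⟩

open Classical in
/-- The unit `v_M ∈ B(S)^×` attached to a maximal subgroup `M < S`:
its mark at `P` is `-1` if `P ≤ M` and `+1` otherwise. -/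
noncomputable def vUnit (S : Type*) [Group S] (M : Subgroup S) : Subgroup S → ℤ :=
  fun P => if P ≤ M then -1 else 1

end BurnsideFusion

namespace BurnsideFusion

variable {G : Type*} [Group G]

/-- `S` is a Sylow `p`-subgroup of `G`. -/
def IsSylow (p : ℕ) (S : Subgroup G) : Prop :=
  IsPGroup p ↥S ∧ ¬ p ∣ S.index

/-- `K` is a Sylow `p`-subgroup of `H` (both subgroups of an ambient group `G`). -/
def IsSylowIn (p : ℕ) (H K : Subgroup G) : Prop :=
  K ≤ H ∧ IsPGroup p ↥K ∧ ¬ p ∣ (K.subgroupOf H).index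

/-- An element of the ghost ring of `S` has marks which agree on pairs of subgroups
of `S` that are conjugate by an element of `N ≤ G`.  For `N = ⊤` this is stability
for the Frobenius fusion system `F_S(G)`; for `N = N_G(S)` it is stability for
`F_S(N_G(S))`. -/
def frobStable (S N : Subgroup G) (b : Subgroup ↥S → ℤ) : Prop :=
  ∀ P Q : Subgroup ↥S,
    (∃ g ∈ N, (P.map S.subtype).map (MulAut.conj g).toMonoidHom = Q.map S.subtype) →
    b P = b Q

/-- The Burnside ring `B(F_S(N))` of the fusion system on `S` induced by a subgroup
`N` of `G` containing `S`, as a subset of `B(S)`. -/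
noncomputable def frobBurnside (S N : Subgroup G) : Set (Subgroup ↥S → ℤ) :=
  {b | b ∈ burnsideRing ↥S ∧ frobStable S N b}

/-- The unit group `B(F_S(N))^×`, as a set. -/
noncomputable def frobUnits (S N : Subgroup G) : Set (Subgroup ↥S → ℤ) :=
  {b | b ∈ frobBurnside S N ∧ b * b = 1}

/-- Restriction `B(N) → B(S)` for `S ≤ N ≤ G`, on marks. -/
def resMark₂ (S N : Subgroup G) (b : Subgroup ↥N → ℤ) : Subgroup ↥S → ℤ :=
  fun P => b ((P.map S.subtype).subgroupOf N)

/-- Tensor induction `B(Ten^G_S) : B(S)^× → B(G)^×`, on marks: the mark of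
`Ten^G_S b` at `H ≤ G` is the product over the double cosets `HgS` of the marks
`b_{(g⁻¹Hg ∩ S)}`. -/
noncomputable def tenInd (S : Subgroup G) (b : Subgroup ↥S → ℤ) : Subgroup G → ℤ :=
  fun H => ∏ᶠ c : DoubleCoset.Quotient (H : Set G) (S : Set G),
    b ((H.comap (MulAut.conj (Quotient.out c)).toMonoidHom).subgroupOf S)

/-- `Aut_G(S)`: the automorphisms of `S ≤ G` induced by conjugation by elements
of `G` (as a set). -/
def autGSet (S : Subgroup G) : Set (MulAut ↥S) :=
  {α | ∃ g : G, ∀ x : ↥S, ((α x : ↥S) : G) = g * (x : G) * g⁻¹}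

end BurnsideFusion

/-!
Inner automorphisms act trivially on `B(S)`, so the trace of a unit `u` is the product of
the `Aut_F(S)`-translates of `u` over `Out_F(S)`, which is `Out_F(S)`-invariant. Saturation
makes `S` fully automized, so `|Out_F(S)|` is odd; since units square to `1`, the trace is
the identity on invariant units. Hence the inclusion of invariant units is a multiplicative
section, and `u = (u · tr u) · tr u` is the unique decomposition. Finally, every
`α ∈ Aut_F(S)` restricts to an `F`-isomorphism `α⁻¹(Q) → Q`, so the marks of an element of
`B(F)` are `Aut_F(S)`-invariant.
-/

namespace BurnsideFusion

section AutAct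

variable {G : Type*} [Group G]

def autActHom (f : G →* G) : (Subgroup G → ℤ) →+* (Subgroup G → ℤ) :=
  RingHom.pi fun Q => Pi.evalRingHom (fun _ => ℤ) (Q.comap f)

@[simp]
theorem autActHom_apply (f : G →* G) (b : Subgroup G → ℤ) : autActHom f b = autAct f b := rfl

theorem autAct_autAct (α β : MulAut G) (b : Subgroup G → ℤ) :
    autAct α.toMonoidHom (autAct β.toMonoidHom b) = autAct (α * β).toMonoidHom b := rfl

theorem natCard_fixed_comap_eq {X Y : Type*} [MulAction G X] [MulAction G Y] (α : MulAut G)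
    (e : X ≃ Y) (he : ∀ (g : G) (x : X), e (g • x) = α g • e x) (Q : Subgroup G) :
    Nat.card {x : X // ∀ h : G, h ∈ Q.comap α.toMonoidHom → h • x = x} =
      Nat.card {y : Y // ∀ h : G, h ∈ Q → h • y = y} :=
  Nat.card_congr <| e.subtypeEquiv fun x => by
    constructor
    · intro hx h hh
      rw [← α.apply_symm_apply h, ← he, hx _ (by simpa using hh)]
    · intro hy h hh
      exact e.injective (by rw [he]; exact hy _ hh)

def quotientMapEquiv (α : MulAut G) (K : Subgroup G) : G ⧸ K ≃ G ⧸ K.map α.toMonoidHom :=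
  Quotient.congr α.toEquiv fun a b => by
    rw [QuotientGroup.leftRel_apply, QuotientGroup.leftRel_apply, MulEquiv.toEquiv_eq_coe,
      MulEquiv.coe_toEquiv, ← map_inv, ← map_mul]
    exact (Subgroup.mem_map_iff_mem (f := α.toMonoidHom) α.injective).symm

theorem quotientMapEquiv_smul (α : MulAut G) (K : Subgroup G) (g : G) (x : G ⧸ K) :
    quotientMapEquiv α K (g • x) = α g • quotientMapEquiv α K x := by
  induction x using QuotientGroup.induction_on with
  | H s => exact congrArg QuotientGroup.mk (map_mul α g s)

theorem autAct_markVector (α : MulAut G) (K : Subgroup G) :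
    autAct α.toMonoidHom (markVector G K) = markVector G (K.map α.toMonoidHom) :=
  funext fun Q => congrArg Nat.cast <|
    natCard_fixed_comap_eq α (quotientMapEquiv α K) (quotientMapEquiv_smul α K) Q

theorem autAct_conj_markVector (g : G) (K : Subgroup G) :
    autAct (MulAut.conj g).toMonoidHom (markVector G K) = markVector G K :=
  funext fun Q => congrArg Nat.cast <|
    natCard_fixed_comap_eq (MulAut.conj g) (MulAction.toPerm g) (fun h x => by
      simp [MulAut.conj_apply, mul_smul]) Q

theorem autAct_mem_burnsideRing (α : MulAut G) {b : Subgroup G → ℤ}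
    (hb : b ∈ burnsideRing G) :
    autAct α.toMonoidHom b ∈ burnsideRing G := by
  suffices burnsideRing G ≤ (burnsideRing G).comap (autActHom α.toMonoidHom) from this hb
  refine Subring.closure_le.mpr ?_
  rintro _ ⟨K, rfl⟩
  rw [SetLike.mem_coe, Subring.mem_comap, autActHom_apply, autAct_markVector]
  exact Subring.subset_closure ⟨_, rfl⟩

theorem autAct_conj_of_mem_burnsideRing (g : G) {b : Subgroup G → ℤ}
    (hb : b ∈ burnsideRing G) :
    autAct (MulAut.conj g).toMonoidHom b = b := by
  suffices burnsideRing G ≤ (autActHom (MulAut.conj g).toMonoidHom).eqLocus (RingHom.id _) from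
    this hb
  refine Subring.closure_le.mpr ?_
  rintro _ ⟨K, rfl⟩
  exact autAct_conj_markVector g K

end AutAct

section RelTrace

variable {G : Type*} [Group G] {Γ Δ : Subgroup (MulAut G)}

theorem relTrace_one : relTrace Γ Δ (1 : Subgroup G → ℤ) = 1 :=
  finprod_eq_one_of_forall_eq_one fun _ => rfl

theorem relTrace_mul [Finite (↥Γ ⧸ Δ.subgroupOf Γ)] (a b : Subgroup G → ℤ) :
    relTrace Γ Δ (a * b) = relTrace Γ Δ a * relTrace Γ Δ b :=
  finprod_mul_distrib (Set.toFinite _) (Set.toFinite _)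

theorem relTrace_mem_burnsideRing {b : Subgroup G → ℤ} (hb : b ∈ burnsideRing G) :
    relTrace Γ Δ b ∈ burnsideRing G :=
  finprod_induction (· ∈ burnsideRing G) (one_mem _) (fun _ _ => mul_mem)
    fun _ => autAct_mem_burnsideRing _ hb

theorem relTrace_eq_pow_index [Finite (↥Γ ⧸ Δ.subgroupOf Γ)] {b : Subgroup G → ℤ}
    (hb : ∀ α ∈ Γ, autAct α.toMonoidHom b = b) :
    relTrace Γ Δ b = b ^ (Δ.subgroupOf Γ).index := by
  have := Fintype.ofFinite (↥Γ ⧸ Δ.subgroupOf Γ)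
  rw [relTrace, finprod_eq_prod_of_fintype,
    Finset.prod_congr rfl fun c _ => hb _ (Quotient.out c).2, Finset.prod_const,
    Finset.card_univ, Subgroup.index, Nat.card_eq_fintype_card]

theorem autAct_eq_of_mk_eq {b : Subgroup G → ℤ}
    (hΔ : ∀ δ ∈ Δ, autAct δ.toMonoidHom b = b)
    {x y : Γ} (h : (QuotientGroup.mk x : Γ ⧸ Δ.subgroupOf Γ) = QuotientGroup.mk y) :
    autAct (x : MulAut G).toMonoidHom b = autAct (y : MulAut G).toMonoidHom b := by
  have hd : x⁻¹ * y ∈ Δ.subgroupOf Γ := QuotientGroup.eq.mp h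
  rw [show y = x * (x⁻¹ * y) by group, Subgroup.coe_mul, ← autAct_autAct,
    hΔ _ (Subgroup.mem_subgroupOf.mp hd)]

theorem autAct_relTrace [Finite (↥Γ ⧸ Δ.subgroupOf Γ)] {b : Subgroup G → ℤ}
    (hΔ : ∀ δ ∈ Δ, autAct δ.toMonoidHom b = b) {β : MulAut G} (hβ : β ∈ Γ) :
    autAct β.toMonoidHom (relTrace Γ Δ b) = relTrace Γ Δ b := by
  let γ : Γ := ⟨β, hβ⟩
  let f (c : Γ ⧸ Δ.subgroupOf Γ) := autAct (c.out : MulAut G).toMonoidHom b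
  have hterm (c : Γ ⧸ Δ.subgroupOf Γ) : autAct β.toMonoidHom (f c) = f (γ • c) := by
    rw [autAct_autAct]
    refine autAct_eq_of_mk_eq (x := γ * c.out) hΔ ?_
    rw [QuotientGroup.out_eq']
    conv_rhs => rw [← QuotientGroup.out_eq' c]
    rfl
  calc autAct β.toMonoidHom (relTrace Γ Δ b)
      = ∏ᶠ c, autAct β.toMonoidHom (f c) := map_finprod (autActHom _) (Set.toFinite _)
    _ = ∏ᶠ c, f (γ • c) := finprod_congr hterm
    _ = relTrace Γ Δ b := finprod_comp_equiv (MulAction.toPerm γ)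

theorem relTrace_mem_fixedUnits [Finite (↥Γ ⧸ Δ.subgroupOf Γ)] {b : Subgroup G → ℤ}
    (hΔ : ∀ δ ∈ Δ, autAct δ.toMonoidHom b = b) (hb : b ∈ burnsideUnits G) :
    relTrace Γ Δ b ∈ fixedUnits G Γ :=
  ⟨⟨relTrace_mem_burnsideRing hb.1, by rw [← relTrace_mul, hb.2, relTrace_one]⟩,
    fun _ hβ => autAct_relTrace hΔ hβ⟩

theorem relTrace_eq_self_of_mem_fixedUnits [Finite (↥Γ ⧸ Δ.subgroupOf Γ)]
    (hodd : ¬ 2 ∣ (Δ.subgroupOf Γ).index) {b : Subgroup G → ℤ}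
    (hb : b ∈ fixedUnits G Γ) :
    relTrace Γ Δ b = b := by
  rw [relTrace_eq_pow_index hb.2, pow_eq_pow_mod _ (by rw [sq]; exact hb.1.2 : b ^ 2 = 1),
    Nat.two_dvd_ne_zero.mp hodd, pow_one]

theorem existsUnique_ker_relTrace_mul_fixedUnits [Finite (↥Γ ⧸ Δ.subgroupOf Γ)]
    (hodd : ¬ 2 ∣ (Δ.subgroupOf Γ).index) {u : Subgroup G → ℤ}
    (hΔ : ∀ δ ∈ Δ, autAct δ.toMonoidHom u = u) (hu : u ∈ burnsideUnits G) :
    ∃! q : (Subgroup G → ℤ) × (Subgroup G → ℤ),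
      q.1 ∈ burnsideUnits G ∧ relTrace Γ Δ q.1 = 1 ∧ q.2 ∈ fixedUnits G Γ ∧
        u = q.1 * q.2 := by
  set t := relTrace Γ Δ u with ht_def
  have ht : t ∈ fixedUnits G Γ := relTrace_mem_fixedUnits hΔ hu
  have htt : t * t = 1 := ht.1.2
  refine ⟨(u * t, t), ⟨⟨mul_mem hu.1 ht.1.1, by rw [mul_mul_mul_comm, hu.2, htt, one_mul]⟩,
    by rw [relTrace_mul, relTrace_eq_self_of_mem_fixedUnits hodd ht, htt], ht,
    by rw [mul_assoc, htt, mul_one]⟩, ?_⟩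
  rintro ⟨a, c⟩ ⟨-, ha, hc, hu_eq⟩
  have hct : c = t := by
    rw [ht_def, hu_eq, relTrace_mul, ha, one_mul, relTrace_eq_self_of_mem_fixedUnits hodd hc]
  subst hct
  rw [hu_eq, mul_assoc, hc.1.2, mul_one]

end RelTrace

section FusionSystem

variable {S : Type*} [Group S] (F : FusionSystem S)

def topRestrictEquiv : MulAut S ≃* MulAut ↥(⊤ : Subgroup S) :=
  MulAut.congr Subgroup.topEquiv.symm

theorem FusionSystem.AutFS_eq_comap :
    F.AutFS = (F.AutF ⊤).comap (topRestrictEquiv (S := S)).toMonoidHom :=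
  rfl

theorem conj_range_eq_comap_AutS :
    (MulAut.conj : S →* MulAut S).range =
      (AutS ⊤).comap (topRestrictEquiv (S := S)).toMonoidHom := by
  ext α
  constructor
  · rintro ⟨g, rfl⟩
    exact ⟨⟨g, Subgroup.mem_normalizer_iff.mpr fun _ => by simp⟩, by ext; rfl⟩
  · rintro ⟨s, hs⟩
    refine ⟨s, MulEquiv.ext fun x => ?_⟩
    simpa [topRestrictEquiv, MulAut.congr, conjAutHom, conjAut] using
      congrArg Subtype.val (DFunLike.congr_fun hs ⟨x, trivial⟩)

theorem FusionSystem.eq_top_of_subConj_top [Finite S] {Q : Subgroup S} (h : F.SubConj ⊤ Q) :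
    Q = ⊤ := by
  obtain ⟨f, hf, hsurj⟩ := h
  refine Q.eq_top_of_card_eq ?_
  rw [← Nat.card_congr (Equiv.ofBijective f ⟨F.inj hf, hsurj⟩), Subgroup.card_top]

theorem FusionSystem.not_dvd_index_inn_of_isSaturated [Finite S] {p : ℕ} (hF : F.IsSaturated p) :
    ¬ p ∣ ((MulAut.conj : S →* MulAut S).range.subgroupOf F.AutFS).index := by
  obtain ⟨Q, hQ, ⟨-, -, hidx⟩, -⟩ := hF ⊤
  obtain rfl := F.eq_top_of_subConj_top hQ
  rwa [← Subgroup.relIndex, F.AutFS_eq_comap, conj_range_eq_comap_AutS, Subgroup.relIndex_comap,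
    Subgroup.map_comap_eq_self_of_surjective topRestrictEquiv.surjective]

theorem FusionSystem.subConj_of_forall_mem_iff {P Q : Subgroup S}
    {f : ↥P →* ↥(⊤ : Subgroup S)} (hf : f ∈ F.Hom P ⊤)
    (hQ : ∀ y : S, y ∈ Q ↔ ∃ x : ↥P, (f x : S) = y) : F.SubConj P Q := by
  obtain ⟨R, -, e, he, hef⟩ := F.factor_mem hf
  obtain rfl : R = Q := by
    ext y
    rw [hQ]
    constructor
    · intro hy
      obtain ⟨x, hx⟩ := e.surjective ⟨y, hy⟩
      exact ⟨x, by rw [← hef, hx]⟩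
    · rintro ⟨x, rfl⟩
      rw [← hef]
      exact (e x).2
  exact ⟨e.toMonoidHom, he, e.surjective⟩

theorem FusionSystem.subConj_comap_of_mem_AutFS {α : MulAut S} (hα : α ∈ F.AutFS)
    (Q : Subgroup S) : F.SubConj (Q.comap α.toMonoidHom) Q := by
  let ι := conjMap 1 (Q.comap α.toMonoidHom) ⊤ fun _ _ => trivial
  have hι : ∀ x, (((topRestrict α).toMonoidHom.comp ι x : ↥(⊤ : Subgroup S)) : S) = α x :=
    fun x => by simp [ι, conjMap, topRestrict]; rfl
  have hιF : ι ∈ F.Hom _ ⊤ := F.conj_mem _ _ _ _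
  refine F.subConj_of_forall_mem_iff (F.comp_mem hιF hα) fun y => ?_
  simp only [hι]
  exact ⟨fun hy => ⟨⟨α.symm y, by simpa using hy⟩, α.apply_symm_apply y⟩,
    fun ⟨x, hx⟩ => hx ▸ x.2⟩

theorem FusionSystem.burnsideUnits_subset_fixedUnits :
    F.burnsideUnits ⊆ fixedUnits S F.AutFS := by
  rintro b ⟨⟨hb, hconj⟩, hbb⟩
  exact ⟨⟨hb, hbb⟩, fun α hα => funext fun Q =>
    hconj _ _ (F.subConj_comap_of_mem_AutFS hα Q)⟩

end FusionSystem

theorem statement5_general {S : Type*} [Group S] [Finite S]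
    (F : FusionSystem S) (hF : F.IsSaturated 2) :
    (∀ u ∈ burnsideUnits S,
      relTrace F.AutFS (MulAut.conj : S →* MulAut S).range u ∈ fixedUnits S ↑F.AutFS) ∧
    (∃ sec : (Subgroup S → ℤ) → (Subgroup S → ℤ),
      (∀ b ∈ fixedUnits S ↑F.AutFS,
        sec b ∈ burnsideUnits S ∧
          relTrace F.AutFS (MulAut.conj : S →* MulAut S).range (sec b) = b) ∧
      (∀ b ∈ fixedUnits S ↑F.AutFS, ∀ c ∈ fixedUnits S ↑F.AutFS,
        sec (b * c) = sec b * sec c)) ∧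
    (∀ u ∈ burnsideUnits S,
      ∃! q : (Subgroup S → ℤ) × (Subgroup S → ℤ),
        q.1 ∈ burnsideUnits S ∧
          relTrace F.AutFS (MulAut.conj : S →* MulAut S).range q.1 = 1 ∧
          q.2 ∈ fixedUnits S ↑F.AutFS ∧ u = q.1 * q.2) ∧
    F.burnsideUnits ⊆ fixedUnits S ↑F.AutFS := by
  have hodd := F.not_dvd_index_inn_of_isSaturated hF
  have hinn : ∀ b ∈ burnsideRing S, ∀ δ ∈ (MulAut.conj : S →* MulAut S).range,
      autAct δ.toMonoidHom b = b := by
    rintro b hb _ ⟨g, rfl⟩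
    exact autAct_conj_of_mem_burnsideRing g hb
  exact ⟨fun u hu => relTrace_mem_fixedUnits (hinn u hu.1) hu,
    ⟨id, fun b hb => ⟨hb.1, relTrace_eq_self_of_mem_fixedUnits hodd hb⟩, fun _ _ _ _ => rfl⟩,
    fun u hu => existsUnique_ker_relTrace_mul_fixedUnits hodd (hinn u hu.1) hu,
    F.burnsideUnits_subset_fixedUnits⟩

theorem statement5 {S : Type*} [Group S] [Finite S] (hS : IsPGroup 2 S)
    (F : FusionSystem S) (hF : F.IsSaturated 2) :
    (∀ u ∈ burnsideUnits S,
      relTrace F.AutFS (MulAut.conj : S →* MulAut S).range u ∈ fixedUnits S ↑F.AutFS) ∧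
    (∃ sec : (Subgroup S → ℤ) → (Subgroup S → ℤ),
      (∀ b ∈ fixedUnits S ↑F.AutFS,
        sec b ∈ burnsideUnits S ∧
          relTrace F.AutFS (MulAut.conj : S →* MulAut S).range (sec b) = b) ∧
      (∀ b ∈ fixedUnits S ↑F.AutFS, ∀ c ∈ fixedUnits S ↑F.AutFS,
        sec (b * c) = sec b * sec c)) ∧
    (∀ u ∈ burnsideUnits S,
      ∃! q : (Subgroup S → ℤ) × (Subgroup S → ℤ),
        q.1 ∈ burnsideUnits S ∧
          relTrace F.AutFS (MulAut.conj : S →* MulAut S).range q.1 = 1 ∧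
          q.2 ∈ fixedUnits S ↑F.AutFS ∧ u = q.1 * q.2) ∧
    F.burnsideUnits ⊆ fixedUnits S ↑F.AutFS :=
  statement5_general F hF

end BurnsideFusion
end

section
/- Let F be a saturated fusion system on a finite 2-group S, and let M < S be a maximal subgroup. Then v_M ∈ B(F)^× if and only if M is strongly closed in F, i.e. for every x ∈ M, every F-conjugate of x lies in M. -/
/-! A maximal subgroup `M` of a finite `2`-group is normal of index `2`, so the marks of `S/M`
are `2` on the subgroups of `M` and `0` elsewhere, and `v_M = 1 - [S/M]` lies in `B(S)`.
Hence `v_M ∈ B(F)^×` exactly when "`P ≤ M`" is invariant under `F`-conjugacy of subgroups.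
Since `F`-isomorphisms send elements to `F`-conjugate elements, and `F`-conjugate elements
generate `F`-conjugate cyclic subgroups, this invariance is strong closure of `M`. -/

section PGroup

variable {p : ℕ} [Fact p.Prime] {G : Type*} [Group G] [Finite G]

theorem IsPGroup.normal_of_isCoatom (hG : IsPGroup p G) {M : Subgroup G} (hM : IsCoatom M) :
    M.Normal :=
  haveI := hG.isNilpotent
  Subgroup.NormalizerCondition.normal_of_coatom M Group.normalizerCondition_of_isNilpotent hM

theorem IsPGroup.index_eq_of_isCoatom (hG : IsPGroup p G) {M : Subgroup G} (hM : IsCoatom M) :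
    M.index = p := by
  obtain ⟨m, hm⟩ := (hG.to_subgroup M).exists_card_eq
  obtain ⟨k, hk⟩ := hG.index M
  have hk0 : k ≠ 0 := by
    rintro rfl
    exact hM.1 (Subgroup.index_eq_one.mp hk)
  have hdvd : p ^ (m + 1) ∣ Nat.card G := by
    rw [← M.card_mul_index, hm, hk, pow_succ]
    exact mul_dvd_mul_left _ (dvd_pow_self p hk0)
  obtain ⟨K, hK, hMK⟩ := Sylow.exists_subgroup_card_pow_succ hdvd hm
  have hKM : K ≠ M := fun h => by
    rw [h, hm] at hK
    exact absurd (Nat.pow_right_injective (Fact.out : p.Prime).two_le hK) m.succ_ne_self.symm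
  have hKtop : K = ⊤ := hM.2 K (lt_of_le_of_ne hMK hKM.symm)
  have hcard := M.card_mul_index
  rw [hm, ← Subgroup.card_top (G := G), ← hKtop, hK, pow_succ] at hcard
  exact Nat.eq_of_mul_eq_mul_left (pow_pos (Fact.out : p.Prime).pos m) hcard

end PGroup

namespace BurnsideFusion

section Marks

variable {G : Type*} [Group G]

theorem smul_eq_self_iff_mem {N : Subgroup G} [N.Normal] (g : G) (x : G ⧸ N) :
    g • x = x ↔ g ∈ N := by
  show (g : G ⧸ N) * x = x ↔ g ∈ N
  rw [mul_eq_right, QuotientGroup.eq_one_iff]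

open Classical in
theorem markVector_of_normal (N : Subgroup G) [N.Normal] (H : Subgroup G) :
    markVector G N H = if H ≤ N then (N.index : ℤ) else 0 := by
  unfold markVector
  split_ifs with hHN
  · rw [Nat.card_congr (Equiv.subtypeUnivEquiv fun x g hg => (smul_eq_self_iff_mem g x).mpr
      (hHN hg)), N.index_eq_card]
  · obtain ⟨g, hgH, hgN⟩ := SetLike.not_le_iff_exists.mp hHN
    have : IsEmpty {x : G ⧸ N // ∀ h : G, h ∈ H → h • x = x} :=
      ⟨fun x => hgN ((smul_eq_self_iff_mem g x.1).mp (x.2 g hgH))⟩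
    simp only [Nat.card_of_isEmpty, Nat.cast_zero]

theorem vUnit_eq_neg_one_iff (M H : Subgroup G) : vUnit G M H = -1 ↔ H ≤ M := by
  unfold vUnit
  split_ifs with h <;> simp [h]

theorem vUnit_mul_self (M : Subgroup G) : vUnit G M * vUnit G M = 1 := by
  funext H
  simp only [Pi.mul_apply, Pi.one_apply, vUnit]
  split_ifs <;> rfl

theorem vUnit_eq_one_sub_markVector {N : Subgroup G} [N.Normal] (hN : N.index = 2) :
    vUnit G N = 1 - markVector G N := by
  funext H
  simp only [vUnit, Pi.sub_apply, Pi.one_apply, markVector_of_normal, hN]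
  split_ifs <;> norm_num

theorem vUnit_mem_burnsideRing {N : Subgroup G} [N.Normal] (hN : N.index = 2) :
    vUnit G N ∈ burnsideRing G := by
  rw [vUnit_eq_one_sub_markVector hN]
  exact sub_mem (one_mem _) (Subring.subset_closure ⟨N, rfl⟩)

end Marks

namespace FusionSystem

variable {S : Type*} [Group S] (F : FusionSystem S)

theorem inclusion_mem {P Q : Subgroup S} (h : P ≤ Q) : Subgroup.inclusion h ∈ F.Hom P Q := by
  have hconj : ∀ x ∈ P, (1 : S) * x * (1 : S)⁻¹ ∈ Q := fun x hx => by simpa using h hx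
  convert F.conj_mem 1 P Q hconj
  ext x
  simp [conjMap]

theorem eq_zpowers_of_mulEquiv {x : S} {R : Subgroup S} (e : Subgroup.zpowers x ≃* R) :
    R = Subgroup.zpowers (e ⟨x, Subgroup.mem_zpowers x⟩ : S) := by
  refine le_antisymm (fun r hr => ?_) (Subgroup.zpowers_le.mpr (e _).2)
  obtain ⟨⟨z, hz⟩, hzr⟩ := e.surjective ⟨r, hr⟩
  obtain ⟨k, rfl⟩ := Subgroup.mem_zpowers_iff.mp hz
  refine Subgroup.mem_zpowers_iff.mpr ⟨k, ?_⟩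
  rw [← SubgroupClass.coe_zpow, ← map_zpow]
  exact congrArg Subtype.val hzr

theorem elemConj_apply {P Q : Subgroup S} {f : ↥P →* ↥Q} (hf : f ∈ F.Hom P Q) (w : ↥P) :
    F.ElemConj (w : S) (f w : S) := by
  obtain ⟨R, -, e, he, hcoe⟩ :=
    F.factor_mem (F.comp_mem (F.inclusion_mem (Subgroup.zpowers_le.mpr w.2)) hf)
  have hgen : (e ⟨w, Subgroup.mem_zpowers _⟩ : S) = f w := hcoe _
  obtain rfl : R = Subgroup.zpowers (f w : S) := hgen ▸ eq_zpowers_of_mulEquiv e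
  exact ⟨e.toMonoidHom, he, Subtype.ext hgen⟩

theorem ElemConj.subConj_zpowers {x y : S} (h : F.ElemConj x y) :
    F.SubConj (Subgroup.zpowers x) (Subgroup.zpowers y) := by
  obtain ⟨f, hf, hfx⟩ := h
  refine ⟨f, hf, fun ⟨z, hz⟩ => ?_⟩
  obtain ⟨k, rfl⟩ := Subgroup.mem_zpowers_iff.mp hz
  exact ⟨⟨x, Subgroup.mem_zpowers x⟩ ^ k, by rw [map_zpow, hfx]; rfl⟩

theorem StronglyClosed.le_of_subConj {M P Q : Subgroup S} (hM : F.StronglyClosed M)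
    (hPQ : F.SubConj P Q) (hPM : P ≤ M) : Q ≤ M := by
  obtain ⟨f, hf, hsurj⟩ := hPQ
  intro z hz
  obtain ⟨w, hw⟩ := hsurj ⟨z, hz⟩
  have hconj := F.elemConj_apply hf w
  rw [hw] at hconj
  exact hM w (hPM w.2) z hconj

theorem stronglyClosed_of_vUnit_mem_burnside {M : Subgroup S} (h : vUnit S M ∈ F.burnside) :
    F.StronglyClosed M := fun x hx y hxy => by
  have hmarks := h.2 _ _ (ElemConj.subConj_zpowers F hxy)
  rw [(vUnit_eq_neg_one_iff M _).mpr (Subgroup.zpowers_le.mpr hx), eq_comm,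
    vUnit_eq_neg_one_iff] at hmarks
  exact hmarks (Subgroup.mem_zpowers y)

theorem vUnit_mem_burnside {M : Subgroup S} (hring : vUnit S M ∈ burnsideRing S)
    (hM : F.StronglyClosed M) : vUnit S M ∈ F.burnside := by
  refine ⟨hring, fun P Q hPQ => ?_⟩
  have hle : P ≤ M ↔ Q ≤ M :=
    ⟨hM.le_of_subConj F hPQ, hM.le_of_subConj F ((fconjSetoid F).iseqv.symm hPQ)⟩
  classical
  simp only [vUnit]
  exact if_congr hle rfl rfl

end FusionSystem

theorem statement13_general {S : Type*} [Group S] [Finite S] (hS : IsPGroup 2 S)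
    (F : FusionSystem S) (M : Subgroup S) (hM : IsCoatom M) :
    vUnit S M ∈ F.burnsideUnits ↔ F.StronglyClosed M := by
  have : Fact (Nat.Prime 2) := ⟨Nat.prime_two⟩
  have := hS.normal_of_isCoatom hM
  have hring : vUnit S M ∈ burnsideRing S := vUnit_mem_burnsideRing (hS.index_eq_of_isCoatom hM)
  exact ⟨fun h => F.stronglyClosed_of_vUnit_mem_burnside h.1,
    fun h => ⟨F.vUnit_mem_burnside hring h, vUnit_mul_self M⟩⟩

theorem statement13 {S : Type*} [Group S] [Finite S] (hS : IsPGroup 2 S)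
    (F : FusionSystem S) (hF : F.IsSaturated 2) (M : Subgroup S) (hM : IsCoatom M) :
    vUnit S M ∈ F.burnsideUnits ↔ F.StronglyClosed M :=
  statement13_general hS F M hM

end BurnsideFusion
end
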